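/- Set a = n − m, and let s, t be integers with t < s < a (a vertex of type 5^a); put χ = min(a, s − t − 1). Let M be the matrix with rows (1, i, j), (0, 1, k), (0, 0, 1), where i ∈ 𝒫^{-χ}/𝒫^{-s}, j ∈ 𝒪/𝒫^{-t}, and k ∈ 𝒪/𝒫^{s-t}. Then M represents a γ-fixed point at the vertex (s,t) if and only if v(i) ≥ −s − m, v(k) ≥ s − t − n, and k·i·(1 − u₂/u₃) + j·(u₁/u₃ − 1) ∈ 𝒫^{-t}. -/

import Mathlib

noncomputable section

/-- The element π of F = K((π)). -/
def pp (K : Type*) [Field K] : LaurentSeries K := HahnSeries.single (1 : ℤ) (1 : K)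

/-- The π-adic valuation on F = K((π)), with v(0) = ⊤. -/
def vv {K : Type*} [Field K] (x : LaurentSeries K) : WithTop ℤ := x.orderTop

/-- x ∈ 𝒫^r, i.e. v(x) ≥ r. -/
def inP {K : Type*} [Field K] (r : ℤ) (x : LaurentSeries K) : Prop := (r : WithTop ℤ) ≤ vv x

/-- x ∈ 𝒫^r/𝒫^{r'} : x is a polynomial x_r π^r + ⋯ + x_{r'-1} π^{r'-1} (possibly 0). -/
def inPQ {K : Type*} [Field K] (r r' : ℤ) (x : LaurentSeries K) : Prop :=
  inP r x ∧ ∀ i : ℤ, r' ≤ i → x.coeff i = 0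

/-- Membership in GL₃(𝒪): entries in 𝒪 and determinant a unit of 𝒪. -/
def inGLO {K : Type*} [Field K] (C : Matrix (Fin 3) (Fin 3) (LaurentSeries K)) : Prop :=
  (∀ i j, inP 0 (C i j)) ∧ vv C.det = 0

/-- The matrix x_{(s,t)} = diag(1, π^s, π^t). -/
def xst (K : Type*) [Field K] (s t : ℤ) : Matrix (Fin 3) (Fin 3) (LaurentSeries K) :=
  Matrix.diagonal ![1, pp K ^ s, pp K ^ t]

/-- Membership in the subgroup I^a of GL₃(F). -/
def inIa {K : Type*} [Field K] (a : ℤ) (g : Matrix (Fin 3) (Fin 3) (LaurentSeries K)) : Prop :=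
  g.det ≠ 0 ∧
  vv (g 0 0) = 0 ∧ vv (g 1 1) = 0 ∧ vv (g 2 2) = 0 ∧
  inP (-a) (g 0 1) ∧ inP (-a) (g 0 2) ∧ inP 0 (g 1 2) ∧
  inP (a + 1) (g 1 0) ∧ inP (a + 1) (g 2 0) ∧ inP 1 (g 2 1)

/-- Membership in x_{(s,t)}·GL₃(𝒪)·x_{(s,t)}⁻¹. -/
def inConj {K : Type*} [Field K] (s t : ℤ) (g : Matrix (Fin 3) (Fin 3) (LaurentSeries K)) : Prop :=
  ∃ C, inGLO C ∧ g = xst K s t * C * (xst K s t)⁻¹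

/-- M represents a γ-fixed point at the vertex (s,t): there is C ∈ GL₃(𝒪) with
γ·M·x_{(s,t)} = M·x_{(s,t)}·C. -/
def reprFixed {K : Type*} [Field K] (γ M : Matrix (Fin 3) (Fin 3) (LaurentSeries K))
    (s t : ℤ) : Prop :=
  ∃ C, inGLO C ∧ γ * (M * xst K s t) = M * xst K s t * C


/-!
Since `M · x_{(s,t)}` is invertible, the only candidate for `C` is its conjugate
`(M x_{(s,t)})⁻¹ γ (M x_{(s,t)})`. This is upper triangular with diagonal `u₁, u₂, u₃` and
off-diagonal entries `i (u₁ - u₂) π^s`, `k (u₂ - u₃) π^(t-s)` and `(k i (1 - u₂/u₃) + j (u₁/u₃ - 1)) u₃ π^t`,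
so it lies in `GL₃(𝒪)` exactly when these three entries are integral. As `v(u₁ - u₂) = m` and
`v(u₂ - u₃) = n`, integrality of the three entries is the three valuation conditions.
-/

section Valuation

variable {K : Type*} [Field K]

lemma vv_mul (x y : LaurentSeries K) : vv (x * y) = vv x + vv y :=
  HahnSeries.orderTop_mul x y

lemma vv_pp_zpow (s : ℤ) : vv (pp K ^ s) = s := by
  rw [pp, ← RatFunc.single_zpow, vv, HahnSeries.orderTop_single one_ne_zero]

lemma pp_ne_zero : pp K ≠ 0 :=
  HahnSeries.single_ne_zero one_ne_zero

lemma ne_zero_of_vv_eq_coe {x : LaurentSeries K} {c : ℤ} (h : vv x = c) : x ≠ 0 := by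
  rintro rfl
  simp [vv] at h

lemma vv_sub_of_vv_one_sub_div {w u : LaurentSeries K} {c : ℤ} (hu : vv u = 0)
    (h : vv (1 - w / u) = c) : vv (w - u) = c := by
  have hu0 : u ≠ 0 := ne_zero_of_vv_eq_coe (c := 0) hu
  have : w - u = -(u * (1 - w / u)) := by field_simp; ring
  rw [this, vv, HahnSeries.orderTop_neg, ← vv, vv_mul, hu, h, zero_add]

lemma inP_mul_mul_zpow_iff {x u : LaurentSeries K} {c r r' s : ℤ} (hu : vv u = c)
    (hr : r = r' + c + s) : inP r (x * u * pp K ^ s) ↔ inP r' x := by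
  unfold inP
  rw [vv_mul, vv_mul, hu, vv_pp_zpow, hr]
  induction vv x using WithTop.recTopCoe with
  | top => simp
  | coe w => norm_cast; omega

end Valuation

section Matrices

open Matrix

lemma diagonal_mul_unitriangular_mul_diagonal {R : Type*} [CommRing R]
    (u₁ u₂ u₃ i j k a b c : R) (habc : a * c = b) :
    diagonal ![u₁, u₂, u₃] * (!![1, i, j; 0, 1, k; 0, 0, 1] * diagonal ![1, a, b]) =
      !![1, i, j; 0, 1, k; 0, 0, 1] * diagonal ![1, a, b] *
        !![u₁, i * (u₁ - u₂) * a, (k * i * (u₃ - u₂) + j * (u₁ - u₃)) * b;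
           0, u₂, k * (u₂ - u₃) * c;
           0, 0, u₃] := by
  subst habc
  ext p q
  fin_cases p <;> fin_cases q <;>
    simp only [mul_apply, Fin.sum_univ_three, diagonal_apply] <;> simp <;> ring

variable {K : Type*} [Field K]

lemma isUnit_det_xst (s t : ℤ) : IsUnit (xst K s t).det := by
  rw [xst, det_diagonal, Fin.prod_univ_three]
  simpa using ((zpow_ne_zero s (pp_ne_zero (K := K))).isUnit.mul
    (zpow_ne_zero t (pp_ne_zero (K := K))).isUnit)

lemma reprFixed_iff_inGLO {γ M C₀ : Matrix (Fin 3) (Fin 3) (LaurentSeries K)} {s t : ℤ}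
    (hM : IsUnit M.det) (hC₀ : γ * (M * xst K s t) = M * xst K s t * C₀) :
    reprFixed γ M s t ↔ inGLO C₀ := by
  refine ⟨fun ⟨C, hC, hγC⟩ => ?_, fun h => ⟨C₀, h, hC₀⟩⟩
  have hMx : IsUnit (M * xst K s t) := by
    rw [isUnit_iff_isUnit_det, det_mul]
    exact hM.mul (isUnit_det_xst s t)
  rwa [← hMx.mul_left_cancel (hγC.symm.trans hC₀)]

lemma inGLO_upperTriangular_iff {d₀ d₁ d₂ x y z : LaurentSeries K}
    (h₀ : vv d₀ = 0) (h₁ : vv d₁ = 0) (h₂ : vv d₂ = 0) :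
    inGLO !![d₀, x, y; 0, d₁, z; 0, 0, d₂] ↔ inP 0 x ∧ inP 0 y ∧ inP 0 z := by
  have hdet : vv (!![d₀, x, y; 0, d₁, z; 0, 0, d₂]).det = 0 := by
    simp [det_fin_three, vv_mul, h₀, h₁, h₂]
  have hzero : vv (0 : LaurentSeries K) = ⊤ := HahnSeries.orderTop_zero
  simp only [inGLO, hdet, and_true, Fin.forall_fin_succ]
  simp [hzero, inP, h₀, h₁, h₂, and_assoc]

end Matrices

theorem stmt19_general (K : Type*) [Field K]
    (u₁ u₂ u₃ : LaurentSeries K) (m n : ℤ)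
    (hu₁ : vv u₁ = 0) (hu₂ : vv u₂ = 0) (hu₃ : vv u₃ = 0)
    (hv₁₂ : vv (1 - u₁ / u₂) = (m : WithTop ℤ))
    (hv₂₃ : vv (1 - u₂ / u₃) = (n : WithTop ℤ))
    (s t : ℤ)
    (i j k : LaurentSeries K) :
    reprFixed (Matrix.diagonal ![u₁, u₂, u₃]) !![1, i, j; 0, 1, k; 0, 0, 1] s t ↔
      (((-s - m : ℤ) : WithTop ℤ) ≤ vv i ∧ ((s - t - n : ℤ) : WithTop ℤ) ≤ vv k ∧
        inP (-t) (k * i * (1 - u₂ / u₃) + j * (u₁ / u₃ - 1))) := by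
  have hu₃0 : u₃ ≠ 0 := ne_zero_of_vv_eq_coe (c := 0) hu₃
  have hst : pp K ^ s * pp K ^ (t - s) = pp K ^ t := by
    rw [← zpow_add₀ pp_ne_zero, add_sub_cancel]
  have hconj : Matrix.diagonal ![u₁, u₂, u₃] * (!![1, i, j; 0, 1, k; 0, 0, 1] * xst K s t) =
      !![1, i, j; 0, 1, k; 0, 0, 1] * xst K s t *
        !![u₁, i * (u₁ - u₂) * pp K ^ s, (k * i * (u₃ - u₂) + j * (u₁ - u₃)) * pp K ^ t;
           0, u₂, k * (u₂ - u₃) * pp K ^ (t - s);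
           0, 0, u₃] :=
    diagonal_mul_unitriangular_mul_diagonal u₁ u₂ u₃ i j k _ _ _ hst
  set E := k * i * (1 - u₂ / u₃) + j * (u₁ / u₃ - 1)
  have hE : k * i * (u₃ - u₂) + j * (u₁ - u₃) = E * u₃ := by
    simp only [E]
    field_simp
  rw [reprFixed_iff_inGLO (by simp [Matrix.det_fin_three]) hconj,
    inGLO_upperTriangular_iff hu₁ hu₂ hu₃, hE,
    inP_mul_mul_zpow_iff (r' := -s - m) (vv_sub_of_vv_one_sub_div hu₂ hv₁₂) (by ring),
    inP_mul_mul_zpow_iff (r' := -t) (c := 0) hu₃ (by ring),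
    inP_mul_mul_zpow_iff (r' := s - t - n) (vv_sub_of_vv_one_sub_div hu₃ hv₂₃) (by ring)]
  exact and_congr_right' and_comm

theorem stmt19 (K : Type*) [Field K]
    (u₁ u₂ u₃ : LaurentSeries K) (m n : ℤ)
    (hu₁ : vv u₁ = 0) (hu₂ : vv u₂ = 0) (hu₃ : vv u₃ = 0)
    (h₁₂ : u₁ ≠ u₂) (h₁₃ : u₁ ≠ u₃) (h₂₃ : u₂ ≠ u₃)
    (hm : 0 ≤ m) (hmn : m ≤ n)
    (hv₁₂ : vv (1 - u₁ / u₂) = (m : WithTop ℤ))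
    (hv₁₃ : vv (1 - u₁ / u₃) = (m : WithTop ℤ))
    (hv₂₃ : vv (1 - u₂ / u₃) = (n : WithTop ℤ))
    (a s t χ : ℤ) (ha : a = n - m) (hts : t < s) (hsa : s < a) (hχ : χ = min a (s - t - 1))
    (i j k : LaurentSeries K) (hi : inPQ (-χ) (-s) i) (hj : inPQ 0 (-t) j)
    (hk : inPQ 0 (s - t) k) :
    reprFixed (Matrix.diagonal ![u₁, u₂, u₃]) !![1, i, j; 0, 1, k; 0, 0, 1] s t ↔
      (((-s - m : ℤ) : WithTop ℤ) ≤ vv i ∧ ((s - t - n : ℤ) : WithTop ℤ) ≤ vv k ∧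
        inP (-t) (k * i * (1 - u₂ / u₃) + j * (u₁ / u₃ - 1))) :=
  stmt19_general K u₁ u₂ u₃ m n hu₁ hu₂ hu₃ hv₁₂ hv₂₃ s t i j k
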